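/- arXiv:1912.07664 — 2 statements merged into one kernel-verified Lean document; each statement's English description precedes it below -/
import Mathlib

section
/- Let N ≥ 5 and W, ΛW as above. Then ∫_{ℝ^N} |x|^{2−N} W^{4/(N−2)}(x) ΛW(x) dx = ((N−2)²/(2(N+2))) ∫_{ℝ^N} |x|^{2−N} W^{(N+2)/(N−2)}(x) dx. -/
open MeasureTheory Real

/-- The Aubin–Talenti ground state `W`. -/
noncomputable def W (N : ℕ) (x : EuclideanSpace ℝ (Fin N)) : ℝ :=
  (1 + ‖x‖ ^ 2 / ((N : ℝ) * ((N : ℝ) - 2))) ^ (((2 : ℝ) - (N : ℝ)) / 2)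

/-- `ΛW = x · ∇W + ((N-2)/2) W`, the generator of the scaling symmetry. -/
noncomputable def LamW (N : ℕ) (x : EuclideanSpace ℝ (Fin N)) : ℝ :=
  (inner ℝ x (gradient (W N) x) : ℝ) + (((N : ℝ) - 2) / 2) * W N x

/-!
Both integrands are radial. Writing `W = φ(‖x‖²)` with `φ t = (1 + t/m)^((2-N)/2)` and
`m = N(N-2)`, the Euler identity `⟪x, ∇W⟫ = 2‖x‖² φ'(‖x‖²)` gives the closed form
`ΛW = (N-2)/2 · (1 - ‖x‖²/m) · b^(-N/2)` with `b = 1 + ‖x‖²/m`, so the left integrand is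
`‖x‖^(2-N) ((N-2) b^(-(N+4)/2) - (N-2)/2 · b^(-(N+2)/2))` and the right one is
`‖x‖^(2-N) b^(-(N+2)/2)`. In polar coordinates the weight `‖x‖^(2-N)` reduces the Jacobian
`r^(N-1)` to `r`, and `∫₀^∞ r (1 + r²/m)^(-a) dr = m / (2(a-1))` has an explicit antiderivative,
so both sides are explicit multiples of `N |B₁| m`.
-/

open Set Filter Topology

theorem inner_gradient_comp_norm_sq {E : Type*} [NormedAddCommGroup E] [InnerProductSpace ℝ E]
    [CompleteSpace E] {φ : ℝ → ℝ} {φ' : ℝ} {x : E} (hφ : HasDerivAt φ φ' (‖x‖ ^ 2)) :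
    inner ℝ x (gradient (fun y => φ (‖y‖ ^ 2)) x) = 2 * φ' * ‖x‖ ^ 2 := by
  have hF : HasFDerivAt (fun y : E => φ (‖y‖ ^ 2)) (φ' • 2 • innerSL ℝ x) x :=
    hφ.comp_hasFDerivAt x (hasStrictFDerivAt_norm_sq x).hasFDerivAt
  rw [inner_gradient_right, hF.fderiv]
  simp only [smul_apply, coe_innerSL_apply, inner_self_eq_norm_sq_to_K,
    Real.ringHom_apply, nsmul_eq_mul, Nat.cast_ofNat, smul_eq_mul]
  ring

section OnePlusSqDiv

variable {m a : ℝ}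

theorem hasDerivAt_one_add_sq_div_rpow_one_sub (hm : 0 < m) (ha : a ≠ 1) (r : ℝ) :
    HasDerivAt (fun r : ℝ => -(m / (2 * (a - 1))) * (1 + r ^ 2 / m) ^ (1 - a))
      (r * (1 + r ^ 2 / m) ^ (-a)) r := by
  have hbase : HasDerivAt (fun r : ℝ => 1 + r ^ 2 / m) (2 * r / m) r := by
    simpa using ((hasDerivAt_pow 2 r).div_const m).const_add 1
  refine ((hbase.rpow_const (p := 1 - a) (Or.inl (by positivity))).const_mul
    (-(m / (2 * (a - 1))))).congr_deriv ?_
  have : a - 1 ≠ 0 := sub_ne_zero.mpr ha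
  rw [show 1 - a - 1 = -a by ring]
  field_simp
  ring

theorem tendsto_one_add_sq_div_rpow_atTop (hm : 0 < m) {q : ℝ} (hq : q < 0) :
    Tendsto (fun r : ℝ => (1 + r ^ 2 / m) ^ q) atTop (𝓝 0) := by
  have hbase : Tendsto (fun r : ℝ => 1 + r ^ 2 / m) atTop atTop :=
    tendsto_atTop_add_const_left _ _ ((tendsto_pow_atTop two_ne_zero).atTop_div_const hm)
  have hpow := tendsto_rpow_neg_atTop (neg_pos.mpr hq)
  rw [neg_neg] at hpow
  exact hpow.comp hbase

theorem integrableOn_Ioi_mul_one_add_sq_div_rpow_neg (hm : 0 < m) (ha : 1 < a) :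
    IntegrableOn (fun r : ℝ => r * (1 + r ^ 2 / m) ^ (-a)) (Ioi 0) := by
  have hlim := (tendsto_one_add_sq_div_rpow_atTop hm (q := 1 - a) (by linarith)).const_mul
    (-(m / (2 * (a - 1))))
  rw [mul_zero] at hlim
  exact integrableOn_Ioi_deriv_of_nonneg'
    (fun r _ => hasDerivAt_one_add_sq_div_rpow_one_sub hm ha.ne' r)
    (fun r (_ : 0 < r) => by positivity) hlim

theorem integral_Ioi_mul_one_add_sq_div_rpow_neg (hm : 0 < m) (ha : 1 < a) :
    ∫ r in Ioi (0 : ℝ), r * (1 + r ^ 2 / m) ^ (-a) = m / (2 * (a - 1)) := by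
  have hlim := (tendsto_one_add_sq_div_rpow_atTop hm (q := 1 - a) (by linarith)).const_mul
    (-(m / (2 * (a - 1))))
  rw [mul_zero] at hlim
  rw [integral_Ioi_of_hasDerivAt_of_tendsto'
    (fun r _ => hasDerivAt_one_add_sq_div_rpow_one_sub hm ha.ne' r)
    (integrableOn_Ioi_mul_one_add_sq_div_rpow_neg hm ha) hlim]
  simp

theorem integral_Ioi_mul_sub_one_add_sq_div_rpow_neg (hm : 0 < m) (ha : 1 < a) {b : ℝ}
    (hb : 1 < b) (c d : ℝ) :
    ∫ r in Ioi (0 : ℝ), r * (c * (1 + r ^ 2 / m) ^ (-a) - d * (1 + r ^ 2 / m) ^ (-b))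
      = c * (m / (2 * (a - 1))) - d * (m / (2 * (b - 1))) := by
  simp_rw [mul_sub, mul_left_comm _ c, mul_left_comm _ d]
  rw [integral_sub ((integrableOn_Ioi_mul_one_add_sq_div_rpow_neg hm ha).const_mul _)
      ((integrableOn_Ioi_mul_one_add_sq_div_rpow_neg hm hb).const_mul _),
    integral_const_mul, integral_const_mul, integral_Ioi_mul_one_add_sq_div_rpow_neg hm ha,
    integral_Ioi_mul_one_add_sq_div_rpow_neg hm hb]
  ring

end OnePlusSqDiv

theorem integral_norm_rpow_two_sub_finrank_mul {E : Type*} [NormedAddCommGroup E]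
    [NormedSpace ℝ E] [FiniteDimensional ℝ E] [Nontrivial E] [MeasurableSpace E] [BorelSpace E]
    (μ : Measure E) [μ.IsAddHaarMeasure] (f : ℝ → ℝ) :
    ∫ x, ‖x‖ ^ (2 - (Module.finrank ℝ E : ℝ)) * f ‖x‖ ∂μ
      = Module.finrank ℝ E * μ.real (Metric.ball 0 1) * ∫ r in Ioi (0 : ℝ), r * f r := by
  set d := Module.finrank ℝ E
  have hd : 1 ≤ d := Module.finrank_pos
  rw [integral_fun_norm_addHaar μ (fun r => r ^ (2 - (d : ℝ)) * f r), nsmul_eq_mul, smul_eq_mul,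
    mul_assoc]
  congr 2
  refine setIntegral_congr_fun measurableSet_Ioi fun r (hr : 0 < r) => ?_
  rw [smul_eq_mul, ← mul_assoc, ← rpow_natCast, ← rpow_add hr, Nat.cast_sub hd]
  norm_num

section AubinTalenti

variable {N : ℕ}

theorem W_rpow (hN : 2 ≤ N) (x : EuclideanSpace ℝ (Fin N)) (p : ℝ) :
    W N x ^ p = (1 + ‖x‖ ^ 2 / ((N : ℝ) * ((N : ℝ) - 2))) ^ (((2 : ℝ) - N) / 2 * p) := by
  have hN' : (2 : ℝ) ≤ N := by exact_mod_cast hN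
  have hm : 0 ≤ (N : ℝ) * ((N : ℝ) - 2) := mul_nonneg (by linarith) (by linarith)
  rw [W, ← rpow_mul (by positivity)]

theorem LamW_eq (hN : 3 ≤ N) (x : EuclideanSpace ℝ (Fin N)) :
    LamW N x = ((N : ℝ) - 2) / 2 * (1 - ‖x‖ ^ 2 / ((N : ℝ) * ((N : ℝ) - 2)))
      * (1 + ‖x‖ ^ 2 / ((N : ℝ) * ((N : ℝ) - 2))) ^ (-(N : ℝ) / 2) := by
  have hN' : (3 : ℝ) ≤ N := by exact_mod_cast hN
  set m : ℝ := (N : ℝ) * ((N : ℝ) - 2)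
  have hm : 0 < m := mul_pos (by linarith) (by linarith)
  have hb : 0 < 1 + ‖x‖ ^ 2 / m := by positivity
  have hφ : HasDerivAt (fun t : ℝ => (1 + t / m) ^ (((2 : ℝ) - N) / 2))
      (1 / m * (((2 : ℝ) - N) / 2) * (1 + ‖x‖ ^ 2 / m) ^ (((2 : ℝ) - N) / 2 - 1)) (‖x‖ ^ 2) :=
    (((hasDerivAt_id' _).div_const m).const_add 1).rpow_const (Or.inl hb.ne')
  have hW : W N x = (1 + ‖x‖ ^ 2 / m) * (1 + ‖x‖ ^ 2 / m) ^ (-(N : ℝ) / 2) := by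
    change (1 + ‖x‖ ^ 2 / m) ^ (((2 : ℝ) - N) / 2) = _
    rw [← rpow_one_add' hb.le (by linarith)]
    ring_nf
  rw [LamW, hW, show W N = fun y => (1 + ‖y‖ ^ 2 / m) ^ (((2 : ℝ) - N) / 2) from rfl,
    inner_gradient_comp_norm_sq hφ, show ((2 : ℝ) - N) / 2 - 1 = -N / 2 by ring]
  field_simp
  ring

theorem W_rpow_mul_LamW (hN : 3 ≤ N) (x : EuclideanSpace ℝ (Fin N)) :
    W N x ^ ((4 : ℝ) / ((N : ℝ) - 2)) * LamW N x
      = ((N : ℝ) - 2) * (1 + ‖x‖ ^ 2 / ((N : ℝ) * ((N : ℝ) - 2))) ^ (-(((N : ℝ) + 4) / 2))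
        - ((N : ℝ) - 2) / 2
          * (1 + ‖x‖ ^ 2 / ((N : ℝ) * ((N : ℝ) - 2))) ^ (-(((N : ℝ) + 2) / 2)) := by
  have hN' : (3 : ℝ) ≤ N := by exact_mod_cast hN
  have hN2 : (N : ℝ) - 2 ≠ 0 := by linarith
  have hm : 0 < (N : ℝ) * ((N : ℝ) - 2) := mul_pos (by linarith) (by linarith)
  have hb : 0 < 1 + ‖x‖ ^ 2 / ((N : ℝ) * ((N : ℝ) - 2)) := by positivity
  rw [W_rpow (by omega), LamW_eq hN,
    show ((2 : ℝ) - N) / 2 * (4 / (N - 2)) = -2 by field_simp; ring,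
    show -(((N : ℝ) + 4) / 2) = -2 + -N / 2 by ring,
    show -(((N : ℝ) + 2) / 2) = 1 + (-2 + -N / 2) by ring,
    rpow_one_add' hb.le (by linarith), rpow_add hb]
  ring

theorem W_rpow_critical (hN : 3 ≤ N) (x : EuclideanSpace ℝ (Fin N)) :
    W N x ^ (((N : ℝ) + 2) / ((N : ℝ) - 2))
      = (1 + ‖x‖ ^ 2 / ((N : ℝ) * ((N : ℝ) - 2))) ^ (-(((N : ℝ) + 2) / 2)) := by
  have hN2 : (N : ℝ) - 2 ≠ 0 := by
    have : (3 : ℝ) ≤ N := by exact_mod_cast hN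
    linarith
  rw [W_rpow (by omega)]
  congr 1
  field_simp
  ring

end AubinTalenti

theorem integral_weighted_W_pow_LamW (N : ℕ) (hN : 5 ≤ N) :
    ∫ x : EuclideanSpace ℝ (Fin N),
        ‖x‖ ^ ((2 : ℝ) - (N : ℝ)) * W N x ^ ((4 : ℝ) / ((N : ℝ) - 2)) * LamW N x
      = (((N : ℝ) - 2) ^ 2 / (2 * ((N : ℝ) + 2))) *
          ∫ x : EuclideanSpace ℝ (Fin N),
            ‖x‖ ^ ((2 : ℝ) - (N : ℝ)) * W N x ^ (((N : ℝ) + 2) / ((N : ℝ) - 2)) := by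
  have hN' : (5 : ℝ) ≤ N := by exact_mod_cast hN
  have : Nontrivial (EuclideanSpace ℝ (Fin N)) :=
    Module.nontrivial_of_finrank_pos (R := ℝ) (by rw [finrank_euclideanSpace_fin]; omega)
  have radial :=
    integral_norm_rpow_two_sub_finrank_mul (volume : Measure (EuclideanSpace ℝ (Fin N)))
  rw [finrank_euclideanSpace_fin] at radial
  simp_rw [mul_assoc, W_rpow_mul_LamW (by omega : 3 ≤ N), W_rpow_critical (by omega : 3 ≤ N)]
  set m : ℝ := (N : ℝ) * ((N : ℝ) - 2)
  have hm : 0 < m := mul_pos (by linarith) (by linarith)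
  rw [radial fun r => (N - 2) * (1 + r ^ 2 / m) ^ (-(((N : ℝ) + 4) / 2))
      - (N - 2) / 2 * (1 + r ^ 2 / m) ^ (-(((N : ℝ) + 2) / 2)),
    radial fun r => (1 + r ^ 2 / m) ^ (-(((N : ℝ) + 2) / 2)),
    integral_Ioi_mul_sub_one_add_sq_div_rpow_neg hm (by linarith) (by linarith),
    integral_Ioi_mul_one_add_sq_div_rpow_neg hm (by linarith),
    show ((N : ℝ) + 4) / 2 - 1 = (N + 2) / 2 by ring, show ((N : ℝ) + 2) / 2 - 1 = N / 2 by ring]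
  have : (N : ℝ) ≠ 0 := by linarith
  have : (N : ℝ) + 2 ≠ 0 := by linarith
  field_simp
  ring
end

section
/- Let N ≥ 5, J ≥ 1. There is a constant C (depending on N, J) such that for all reals y₁,…,y_J, h: |(N−2)/(2N)·|Σⱼyⱼ + h|^{2N/(N−2)} − (N−2)/(2N)·Σⱼ|yⱼ|^{2N/(N−2)} − Σⱼ|yⱼ|^{4/(N−2)}yⱼh − Σ_{j≠k}|yⱼ|^{4/(N−2)}yⱼy_k| ≤ C(|h|^{2N/(N−2)} + Σⱼ|yⱼ|^{4/(N−2)}h² + Σ_{j<k}(min(|yⱼ|^{4/(N−2)}y_k², |y_k|^{4/(N−2)}yⱼ²) + min(|yⱼ|^{(N+2)/(N−2)}|y_k|, |y_k|^{(N+2)/(N−2)}|yⱼ|))). -/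
/-!
Let `p = 2N/(N-2) ∈ (2, 4]`, `F z = |z| ^ p / p` and `f z = |z| ^ (p - 2) * z = F' z`. Pick a
profile `y m` of largest modulus and write `∑ y j + h = y m + b` with `b = h + ∑_{j ≠ m} y j`.
The main term `F (y m + b) - F (y m) - f (y m) * b` is at most a constant times
`|y m| ^ (p - 2) * b ^ 2 + |b| ^ p`: convexity of `F` squeezes it between `0` and
`(f (y m + b) - f (y m)) * b`, and `f` is Lipschitz with constant `(p - 1) * R ^ (p - 2)` on
`[-R, R]`. Everything else, `b` included, is controlled by `|h| ^ p`, `∑ |y j| ^ (p - 2) * h ^ 2`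
and the interactions `|y m| ^ (p - 2) * y j ^ 2 + |y j| ^ (p - 1) * |y m|` of `y m` with the other
profiles; as `|y j| ≤ |y m|` and `p ≤ 4`, these are the smaller entries of the two minima in the
pair term of `{j, m}`.
-/

open Real Finset

section RpowInequalities

variable {x y M p : ℝ}

lemma rpow_sub_two_mul_self (hx : 0 ≤ x) (hp : p ≠ 1) : x ^ (p - 2) * x = x ^ (p - 1) := by
  rw [← rpow_add_one' hx (by contrapose! hp; linarith)]
  ring_nf

lemma rpow_sub_two_mul_sq (hx : 0 ≤ x) (hp : p ≠ 0) : x ^ (p - 2) * x ^ 2 = x ^ p := by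
  rw [← rpow_natCast, ← rpow_add' hx (by simpa using hp)]
  norm_num

lemma rpow_mul_rpow_le_rpow_mul_rpow {a b c d : ℝ} (hx : 0 ≤ x) (hxM : x ≤ M) (ha : a ≠ 0)
    (hca : c ≤ a) (habcd : a + b = c + d) : x ^ a * M ^ b ≤ x ^ c * M ^ d := by
  rcases hx.eq_or_lt with rfl | hx
  · rw [zero_rpow ha, zero_mul]
    exact mul_nonneg (rpow_nonneg le_rfl _) (rpow_nonneg hxM _)
  have hM : 0 < M := hx.trans_le hxM
  calc x ^ a * M ^ b = x ^ c * (x ^ (a - c) * M ^ b) := by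
        rw [← mul_assoc, ← rpow_add hx]; ring_nf
    _ ≤ x ^ c * (M ^ (a - c) * M ^ b) := by gcongr
    _ = x ^ c * M ^ d := by rw [← rpow_add hM]; congr 2; linarith

lemma add_rpow_le_two_rpow_mul_add (hx : 0 ≤ x) (hy : 0 ≤ y) (hp : 0 ≤ p) :
    (x + y) ^ p ≤ 2 ^ p * (x ^ p + y ^ p) := by
  calc (x + y) ^ p ≤ (2 * max x y) ^ p := by
        gcongr; linarith [le_max_left x y, le_max_right x y]
    _ = 2 ^ p * max x y ^ p := mul_rpow zero_le_two (le_max_of_le_left hx)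
    _ ≤ 2 ^ p * (x ^ p + y ^ p) := by
        gcongr
        rcases max_cases x y with ⟨h, -⟩ | ⟨h, -⟩ <;> rw [h]
        · linarith [rpow_nonneg hy p]
        · linarith [rpow_nonneg hx p]

lemma abs_rpow_sub_rpow_le (hx : 0 ≤ x) (hy : 0 ≤ y) (hp : 1 ≤ p) :
    |x ^ p - y ^ p| ≤ p * max x y ^ (p - 1) * |x - y| := by
  have hderiv : ∀ u ∈ Set.Icc 0 (max x y),
      HasDerivWithinAt (fun u => u ^ p) (p * u ^ (p - 1)) (Set.Icc 0 (max x y)) u :=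
    fun u _ => (hasDerivAt_rpow_const (Or.inr hp)).hasDerivWithinAt
  have hbound : ∀ u ∈ Set.Icc 0 (max x y), ‖p * u ^ (p - 1)‖ ≤ p * max x y ^ (p - 1) := by
    intro u hu
    rw [norm_of_nonneg (mul_nonneg (by linarith) (rpow_nonneg hu.1 _))]
    gcongr
    exacts [hu.1, hu.2]
  simpa [Real.norm_eq_abs] using (convex_Icc _ _).norm_image_sub_le_of_norm_hasDerivWithin_le
    hderiv hbound ⟨hy, le_max_right x y⟩ ⟨hx, le_max_left x y⟩

lemma abs_rpow_sub_two_mul_sub_le (hx : 0 ≤ x) (hy : 0 ≤ y) (hp : 2 ≤ p) :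
    |x ^ (p - 2) * x - y ^ (p - 2) * y| ≤ (p - 1) * max x y ^ (p - 2) * |x - y| := by
  have hp1 : p ≠ 1 := by linarith
  rw [rpow_sub_two_mul_self hx hp1, rpow_sub_two_mul_self hy hp1,
    show p - 2 = p - 1 - 1 by ring]
  exact abs_rpow_sub_rpow_le hx hy (by linarith)

end RpowInequalities

section AbsRpow

variable {p : ℝ}

lemma abs_abs_rpow_mul (p x : ℝ) : |(|x| ^ p * x)| = |x| ^ p * |x| := by
  rw [abs_mul, abs_of_nonneg (rpow_nonneg (abs_nonneg x) p)]

lemma abs_rpow_sub_two_mul_self_mul_self (hp : p ≠ 0) (x : ℝ) :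
    |x| ^ (p - 2) * x * x = |x| ^ p := by
  rw [mul_assoc, ← sq, ← sq_abs, rpow_sub_two_mul_sq (abs_nonneg x) hp]

lemma abs_abs_rpow_sub_two_mul_sub_le (hp : 2 ≤ p) (u v : ℝ) :
    |(|u| ^ (p - 2) * u) - |v| ^ (p - 2) * v| ≤ (p - 1) * max |u| |v| ^ (p - 2) * |u - v| := by
  have same_sign : ∀ x y : ℝ, 0 ≤ x → 0 ≤ y →
      |(|x| ^ (p - 2) * x) - |y| ^ (p - 2) * y| ≤ (p - 1) * max |x| |y| ^ (p - 2) * |x - y| := by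
    intro x y hx hy
    rw [abs_of_nonneg hx, abs_of_nonneg hy]
    exact abs_rpow_sub_two_mul_sub_le hx hy hp
  have opposite_sign : ∀ x y : ℝ, 0 ≤ x → y ≤ 0 →
      |(|x| ^ (p - 2) * x) - |y| ^ (p - 2) * y| ≤ (p - 1) * max |x| |y| ^ (p - 2) * |x - y| := by
    intro x y hx hy
    have hxy : |x - y| = |x| + |y| := by
      rw [abs_of_nonneg hx, abs_of_nonpos hy, abs_of_nonneg (by linarith)]; ring
    have hM : 0 ≤ max |x| |y| ^ (p - 2) := rpow_nonneg (le_max_of_le_left (abs_nonneg x)) _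
    calc |(|x| ^ (p - 2) * x) - |y| ^ (p - 2) * y|
        ≤ |x| ^ (p - 2) * |x| + |y| ^ (p - 2) * |y| := by
          rw [← abs_abs_rpow_mul, ← abs_abs_rpow_mul]; exact abs_sub _ _
      _ ≤ max |x| |y| ^ (p - 2) * |x| + max |x| |y| ^ (p - 2) * |y| := by
          gcongr <;> linarith [le_max_left |x| |y|, le_max_right |x| |y|]
      _ ≤ (p - 1) * max |x| |y| ^ (p - 2) * |x - y| := by
          rw [hxy]; nlinarith [mul_nonneg hM (add_nonneg (abs_nonneg x) (abs_nonneg y))]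
  rcases le_total 0 u with hu | hu <;> rcases le_total 0 v with hv | hv
  · exact same_sign u v hu hv
  · exact opposite_sign u v hu hv
  · simpa only [abs_sub_comm, max_comm] using opposite_sign v u hv hu
  · simpa only [abs_neg, neg_sub_neg, abs_sub_comm, mul_neg, sub_neg_eq_add, neg_add_eq_sub]
      using same_sign (-u) (-v) (by linarith) (by linarith)

-- Convexity of `|u| ^ p / p`, via Young's inequality.
lemma abs_rpow_div_add_mul_sub_le (hp : 1 < p) (u v : ℝ) :
    |u| ^ p / p + |u| ^ (p - 2) * u * (v - u) ≤ |v| ^ p / p := by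
  have young := young_inequality v (|u| ^ (p - 2) * u) (HolderConjugate.conjExponent hp)
  rw [abs_abs_rpow_mul, rpow_sub_two_mul_self (abs_nonneg u) hp.ne', ← rpow_mul (abs_nonneg u),
    conjExponent, show (p - 1) * (p / (p - 1)) = p by field_simp [show p - 1 ≠ 0 by linarith]]
    at young
  have hsplit : |u| ^ p / (p / (p - 1)) = |u| ^ p - |u| ^ p / p := by field_simp
  rw [mul_sub, abs_rpow_sub_two_mul_self_mul_self (by positivity) u]
  linarith

lemma abs_rpow_taylor_remainder_le (hp : 2 ≤ p) (a b : ℝ) :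
    |(|a + b| ^ p / p - |a| ^ p / p - |a| ^ (p - 2) * a * b)|
      ≤ (p - 1) * 2 ^ (p - 2) * (|a| ^ (p - 2) * b ^ 2 + |b| ^ p) := by
  have lower := abs_rpow_div_add_mul_sub_le (p := p) (by linarith) a (a + b)
  have upper := abs_rpow_div_add_mul_sub_le (p := p) (by linarith) (a + b) a
  rw [add_sub_cancel_left] at lower
  rw [show a - (a + b) = -b by ring] at upper
  have hmax : max |a + b| |a| ≤ |a| + |b| :=
    max_le (abs_add_le a b) (le_add_of_nonneg_right (abs_nonneg b))
  have hbb : |b| ^ (p - 2) * b ^ 2 = |b| ^ p := by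
    rw [← sq_abs, rpow_sub_two_mul_sq (abs_nonneg b) (by linarith)]
  have hlip := abs_abs_rpow_sub_two_mul_sub_le hp (a + b) a
  rw [add_sub_cancel_left] at hlip
  calc |(|a + b| ^ p / p - |a| ^ p / p - |a| ^ (p - 2) * a * b)|
      ≤ ((|a + b| ^ (p - 2) * (a + b)) - |a| ^ (p - 2) * a) * b := by
        rw [abs_le]; constructor <;> linarith
    _ ≤ |(|a + b| ^ (p - 2) * (a + b)) - |a| ^ (p - 2) * a| * |b| := by
        rw [← abs_mul]; exact le_abs_self _
    _ ≤ (p - 1) * max |a + b| |a| ^ (p - 2) * |b| * |b| := by gcongr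
    _ ≤ (p - 1) * (|a| + |b|) ^ (p - 2) * b ^ 2 := by
        rw [mul_assoc _ |b|, ← sq, sq_abs]; gcongr; linarith
    _ ≤ (p - 1) * (2 ^ (p - 2) * (|a| ^ (p - 2) + |b| ^ (p - 2))) * b ^ 2 := by
        gcongr
        · linarith
        · exact add_rpow_le_two_rpow_mul_add (abs_nonneg a) (abs_nonneg b) (by linarith)
    _ = (p - 1) * 2 ^ (p - 2) * (|a| ^ (p - 2) * b ^ 2 + |b| ^ p) := by rw [← hbb]; ring

end AbsRpow

noncomputable def pairInteraction (p x z : ℝ) : ℝ :=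
  min (|x| ^ (p - 2) * z ^ 2) (|z| ^ (p - 2) * x ^ 2) +
    min (|x| ^ (p - 1) * |z|) (|z| ^ (p - 1) * |x|)

lemma pairInteraction_comm (p x z : ℝ) : pairInteraction p x z = pairInteraction p z x := by
  simp only [pairInteraction, min_comm]

lemma pairInteraction_nonneg (p x z : ℝ) : 0 ≤ pairInteraction p x z := by
  unfold pairInteraction; positivity

lemma le_pairInteraction {p : ℝ} (hp2 : 2 ≤ p) (hp4 : p ≤ 4) {x z : ℝ} (hxz : |x| ≤ |z|) :
    |z| ^ (p - 2) * x ^ 2 + |x| ^ (p - 1) * |z| ≤ pairInteraction p x z := by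
  have hsq : |z| ^ (p - 2) * x ^ 2 ≤ |x| ^ (p - 2) * z ^ 2 := by
    have := rpow_mul_rpow_le_rpow_mul_rpow (abs_nonneg x) hxz two_ne_zero (by linarith)
      (show 2 + (p - 2) = (p - 2) + 2 by ring)
    simpa only [rpow_two, sq_abs, mul_comm] using this
  have hlin : |x| ^ (p - 1) * |z| ≤ |z| ^ (p - 1) * |x| := by
    have := rpow_mul_rpow_le_rpow_mul_rpow (abs_nonneg x) hxz (by linarith) (by linarith)
      (show (p - 1) + 1 = 1 + (p - 1) by ring)
    simpa only [rpow_one, mul_comm |x|] using this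
  exact add_le_add (le_min hsq le_rfl) (le_min le_rfl hlin)

lemma sum_erase_le_sum_filter_lt {ι : Type*} [Fintype ι] [LinearOrder ι] (g : ι → ι → ℝ)
    (hg : ∀ i j, g i j = g j i) (hg0 : ∀ i j, 0 ≤ g i j) (m : ι) :
    ∑ j ∈ univ.erase m, g j m ≤ ∑ q ∈ univ.filter (fun q : ι × ι => q.1 < q.2), g q.1 q.2 := by
  set sort : ι → ι × ι := fun j => (min j m, max j m)
  have hsort : ∀ j, g j m = g (sort j).1 (sort j).2 := by
    intro j
    rcases le_total j m with h | h
    · simp [sort, h]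
    · simp [sort, h, hg j m]
  have hinj : Set.InjOn sort (univ.erase m : Finset ι) := by
    intro j hj j' hj' heq
    have hjm := ne_of_mem_erase (mem_coe.1 hj)
    have hj'm := ne_of_mem_erase (mem_coe.1 hj')
    simp only [sort, Prod.mk.injEq] at heq
    rcases le_total j m with h | h <;> rcases le_total j' m with h' | h' <;> simp_all
  calc ∑ j ∈ univ.erase m, g j m = ∑ q ∈ (univ.erase m).image sort, g q.1 q.2 := by
        rw [sum_image hinj]; exact sum_congr rfl fun j _ => hsort j
    _ ≤ ∑ q ∈ univ.filter (fun q : ι × ι => q.1 < q.2), g q.1 q.2 := by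
        refine sum_le_sum_of_subset_of_nonneg ?_ fun q _ _ => hg0 q.1 q.2
        intro q hq
        obtain ⟨j, hj, rfl⟩ := mem_image.1 hq
        simpa [sort, eq_comm] using ne_of_mem_erase hj

lemma expansion_eq_taylor_remainder_sub {ι : Type*} [Fintype ι] [DecidableEq ι] (p : ℝ)
    (y : ι → ℝ) (h : ℝ) (m : ι) :
    p⁻¹ * |(∑ j, y j) + h| ^ p - p⁻¹ * ∑ j, |y j| ^ p - ∑ j, |y j| ^ (p - 2) * y j * h
        - ∑ j, ∑ k ∈ univ.erase j, |y j| ^ (p - 2) * y j * y k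
      = (|y m + (h + ∑ j ∈ univ.erase m, y j)| ^ p / p - |y m| ^ p / p
          - |y m| ^ (p - 2) * y m * (h + ∑ j ∈ univ.erase m, y j))
        - (p⁻¹ * ∑ j ∈ univ.erase m, |y j| ^ p
          + ∑ j ∈ univ.erase m, |y j| ^ (p - 2) * y j * h
          + ∑ j ∈ univ.erase m, ∑ k ∈ univ.erase j, |y j| ^ (p - 2) * y j * y k) := by
  have hsum : (∑ j, y j) + h = y m + (h + ∑ j ∈ univ.erase m, y j) := by
    rw [← add_sum_erase _ _ (mem_univ m)]; ring
  rw [hsum]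
  simp only [← add_sum_erase _ _ (mem_univ m), ← mul_sum]
  ring

noncomputable def interactionWith {ι : Type*} [Fintype ι] [DecidableEq ι] (p : ℝ) (y : ι → ℝ)
    (m : ι) : ℝ :=
  ∑ j ∈ univ.erase m, (|y m| ^ (p - 2) * y j ^ 2 + |y j| ^ (p - 1) * |y m|)

section DominantProfile

variable {ι : Type*} [Fintype ι] [DecidableEq ι] {p : ℝ} {y : ι → ℝ} {m : ι}

lemma interactionWith_nonneg : 0 ≤ interactionWith p y m :=
  sum_nonneg fun _ _ => by positivity

lemma sum_erase_abs_rpow_le_interactionWith (hp : 1 ≤ p) (hm : ∀ j, |y j| ≤ |y m|) :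
    ∑ j ∈ univ.erase m, |y j| ^ p ≤ interactionWith p y m := by
  refine sum_le_sum fun j _ => ?_
  have := rpow_mul_rpow_le_rpow_mul_rpow (abs_nonneg (y j)) (hm j) (by linarith) (by linarith)
    (show p + 0 = (p - 1) + 1 by ring)
  rw [rpow_zero, mul_one, rpow_one] at this
  linarith [show 0 ≤ |y m| ^ (p - 2) * y j ^ 2 by positivity]

lemma sum_erase_abs_sq_le_interactionWith :
    |y m| ^ (p - 2) * ∑ j ∈ univ.erase m, y j ^ 2 ≤ interactionWith p y m := by
  rw [mul_sum]
  exact sum_le_sum fun j _ => le_add_of_nonneg_right (by positivity)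

lemma rpow_sum_erase_abs_le (hp : 1 ≤ p) (hm : ∀ j, |y j| ≤ |y m|) :
    (∑ j ∈ univ.erase m, |y j|) ^ p
      ≤ (Fintype.card ι : ℝ) ^ (p - 1) * interactionWith p y m := by
  calc (∑ j ∈ univ.erase m, |y j|) ^ p
      ≤ (#(univ.erase m) : ℝ) ^ (p - 1) * ∑ j ∈ univ.erase m, |y j| ^ p :=
        rpow_sum_le_const_mul_sum_rpow_of_nonneg _ hp fun j _ => abs_nonneg (y j)
    _ ≤ (Fintype.card ι : ℝ) ^ (p - 1) * interactionWith p y m := by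
        gcongr
        · exact_mod_cast (card_erase_le).trans (card_univ).le
        · exact sum_erase_abs_rpow_le_interactionWith hp hm

lemma rpow_mul_sq_sum_erase_abs_le :
    |y m| ^ (p - 2) * (∑ j ∈ univ.erase m, |y j|) ^ 2
      ≤ (Fintype.card ι : ℝ) * interactionWith p y m := by
  have hcs := sq_sum_le_card_mul_sum_sq (s := univ.erase m) (f := fun j => |y j|)
  simp only [sq_abs] at hcs
  have hcard : (#(univ.erase m) : ℝ) ≤ Fintype.card ι := by
    exact_mod_cast (card_erase_le).trans (card_univ).le
  calc |y m| ^ (p - 2) * (∑ j ∈ univ.erase m, |y j|) ^ 2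
      ≤ |y m| ^ (p - 2) * ((Fintype.card ι : ℝ) * ∑ j ∈ univ.erase m, y j ^ 2) := by
        gcongr
        exact hcs.trans (by gcongr)
    _ ≤ (Fintype.card ι : ℝ) * interactionWith p y m := by
        rw [mul_left_comm]; gcongr; exact sum_erase_abs_sq_le_interactionWith

lemma abs_sum_erase_mul_le (hp : 2 ≤ p) (hm : ∀ j, |y j| ≤ |y m|) (h : ℝ) :
    |∑ j ∈ univ.erase m, |y j| ^ (p - 2) * y j * h|
      ≤ interactionWith p y m + (∑ j, |y j| ^ (p - 2)) * h ^ 2 := by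
  have hterm : ∀ j, |(|y j| ^ (p - 2) * y j * h)| ≤ |y j| ^ p + |y j| ^ (p - 2) * h ^ 2 := by
    intro j
    rw [abs_mul, abs_abs_rpow_mul,
      ← rpow_sub_two_mul_sq (abs_nonneg (y j)) (show p ≠ 0 by linarith)]
    have : |y j| * |h| ≤ |y j| ^ 2 + h ^ 2 := by nlinarith [sq_nonneg (|y j| - |h|), sq_abs h]
    calc |y j| ^ (p - 2) * |y j| * |h| = |y j| ^ (p - 2) * (|y j| * |h|) := mul_assoc _ _ _
      _ ≤ |y j| ^ (p - 2) * (|y j| ^ 2 + h ^ 2) := by gcongr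
      _ = _ := mul_add _ _ _
  calc |∑ j ∈ univ.erase m, |y j| ^ (p - 2) * y j * h|
      ≤ ∑ j ∈ univ.erase m, (|y j| ^ p + |y j| ^ (p - 2) * h ^ 2) :=
        (abs_sum_le_sum_abs _ _).trans (sum_le_sum fun j _ => hterm j)
    _ ≤ interactionWith p y m + (∑ j, |y j| ^ (p - 2)) * h ^ 2 := by
        rw [sum_add_distrib, sum_mul]
        gcongr
        · exact sum_erase_abs_rpow_le_interactionWith (by linarith) hm
        · exact erase_subset _ _

lemma abs_sum_erase_sum_erase_mul_le (hp : 2 ≤ p) (hm : ∀ j, |y j| ≤ |y m|) :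
    |∑ j ∈ univ.erase m, ∑ k ∈ univ.erase j, |y j| ^ (p - 2) * y j * y k|
      ≤ (Fintype.card ι + 1) * interactionWith p y m := by
  set σ := ∑ j ∈ univ.erase m, |y j|
  have hrest : ∀ j, ∑ k ∈ univ.erase j, |y k| ≤ |y m| + σ := fun j =>
    (sum_le_sum_of_subset_of_nonneg (erase_subset _ _) fun k _ _ => abs_nonneg _).trans_eq
      (add_sum_erase _ _ (mem_univ m)).symm
  have hpow : ∀ j, |y j| ^ (p - 1) ≤ |y m| ^ (p - 2) * |y j| := by
    intro j
    have := rpow_mul_rpow_le_rpow_mul_rpow (abs_nonneg (y j)) (hm j) (by linarith) (by linarith)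
      (show (p - 1) + 0 = 1 + (p - 2) by ring)
    rwa [rpow_zero, mul_one, rpow_one, mul_comm] at this
  have hterm : ∀ j, |∑ k ∈ univ.erase j, |y j| ^ (p - 2) * y j * y k|
      ≤ |y j| ^ (p - 1) * |y m| + |y m| ^ (p - 2) * |y j| * σ := by
    intro j
    rw [← mul_sum, abs_mul, abs_abs_rpow_mul, rpow_sub_two_mul_self (abs_nonneg _) (by linarith)]
    calc |y j| ^ (p - 1) * |∑ k ∈ univ.erase j, y k|
        ≤ |y j| ^ (p - 1) * (|y m| + σ) := by
          gcongr; exact (abs_sum_le_sum_abs _ _).trans (hrest j)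
      _ ≤ |y j| ^ (p - 1) * |y m| + |y m| ^ (p - 2) * |y j| * σ := by
          rw [mul_add]; gcongr; exact hpow j
  calc |∑ j ∈ univ.erase m, ∑ k ∈ univ.erase j, |y j| ^ (p - 2) * y j * y k|
      ≤ ∑ j ∈ univ.erase m, (|y j| ^ (p - 1) * |y m| + |y m| ^ (p - 2) * |y j| * σ) :=
        (abs_sum_le_sum_abs _ _).trans (sum_le_sum fun j _ => hterm j)
    _ = ∑ j ∈ univ.erase m, |y j| ^ (p - 1) * |y m| + |y m| ^ (p - 2) * σ ^ 2 := by
        simp only [sum_add_distrib, ← sum_mul, ← mul_sum, σ]; ring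
    _ ≤ interactionWith p y m + (Fintype.card ι) * interactionWith p y m := by
        refine add_le_add ?_ rpow_mul_sq_sum_erase_abs_le
        exact sum_le_sum fun j _ => le_add_of_nonneg_left (by positivity)
    _ = (Fintype.card ι + 1) * interactionWith p y m := by ring

lemma rpow_add_sum_erase_le (hp : 1 ≤ p) (hm : ∀ j, |y j| ≤ |y m|) (h : ℝ) :
    |h + ∑ j ∈ univ.erase m, y j| ^ p
      ≤ 2 ^ p * (|h| ^ p + (Fintype.card ι : ℝ) ^ (p - 1) * interactionWith p y m) := by
  have hs := abs_sum_le_sum_abs y (univ.erase m)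
  calc |h + ∑ j ∈ univ.erase m, y j| ^ p ≤ (|h| + ∑ j ∈ univ.erase m, |y j|) ^ p := by
        gcongr; exact (abs_add_le _ _).trans (by linarith)
    _ ≤ 2 ^ p * (|h| ^ p + (∑ j ∈ univ.erase m, |y j|) ^ p) :=
        add_rpow_le_two_rpow_mul_add (abs_nonneg _) ((abs_nonneg _).trans hs) (by linarith)
    _ ≤ 2 ^ p * (|h| ^ p + (Fintype.card ι : ℝ) ^ (p - 1) * interactionWith p y m) := by
        gcongr; exact rpow_sum_erase_abs_le hp hm

lemma rpow_mul_sq_add_sum_erase_le (h : ℝ) :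
    |y m| ^ (p - 2) * (h + ∑ j ∈ univ.erase m, y j) ^ 2
      ≤ 2 * ((∑ j, |y j| ^ (p - 2)) * h ^ 2 + (Fintype.card ι : ℝ) * interactionWith p y m) := by
  have hS : |y m| ^ (p - 2) ≤ ∑ j, |y j| ^ (p - 2) :=
    single_le_sum (f := fun j => |y j| ^ (p - 2)) (fun j _ => by positivity) (mem_univ m)
  have hs := abs_sum_le_sum_abs y (univ.erase m)
  have hsq : (h + ∑ j ∈ univ.erase m, y j) ^ 2
      ≤ 2 * h ^ 2 + 2 * (∑ j ∈ univ.erase m, |y j|) ^ 2 := by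
    nlinarith [sq_nonneg (h - ∑ j ∈ univ.erase m, y j), sq_abs (∑ j ∈ univ.erase m, y j),
      abs_nonneg (∑ j ∈ univ.erase m, y j)]
  calc |y m| ^ (p - 2) * (h + ∑ j ∈ univ.erase m, y j) ^ 2
      ≤ 2 * (|y m| ^ (p - 2) * h ^ 2 + |y m| ^ (p - 2) * (∑ j ∈ univ.erase m, |y j|) ^ 2) := by
        nlinarith [show 0 ≤ |y m| ^ (p - 2) by positivity]
    _ ≤ 2 * ((∑ j, |y j| ^ (p - 2)) * h ^ 2 + (Fintype.card ι : ℝ) * interactionWith p y m) := by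
        refine mul_le_mul_of_nonneg_left (add_le_add ?_ rpow_mul_sq_sum_erase_abs_le) zero_le_two
        exact mul_le_mul_of_nonneg_right hS (sq_nonneg h)

lemma abs_inv_mul_sum_erase_rpow_le_interactionWith (hp : 1 ≤ p) (hm : ∀ j, |y j| ≤ |y m|) :
    |p⁻¹ * ∑ j ∈ univ.erase m, |y j| ^ p| ≤ interactionWith p y m := by
  have hsum := sum_erase_abs_rpow_le_interactionWith hp hm
  have hinv : p⁻¹ ≤ 1 := inv_le_one_of_one_le₀ hp
  rw [abs_of_nonneg (by positivity)]
  nlinarith [show 0 ≤ ∑ j ∈ univ.erase m, |y j| ^ p by positivity]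

lemma abs_rpow_taylor_remainder_add_sum_erase_le (hp : 2 ≤ p) (hm : ∀ j, |y j| ≤ |y m|)
    (h : ℝ) :
    |(|y m + (h + ∑ j ∈ univ.erase m, y j)| ^ p / p - |y m| ^ p / p
        - |y m| ^ (p - 2) * y m * (h + ∑ j ∈ univ.erase m, y j))|
      ≤ (p - 1) * 2 ^ (p - 2) *
        (2 * ((∑ j, |y j| ^ (p - 2)) * h ^ 2 + (Fintype.card ι : ℝ) * interactionWith p y m)
          + 2 ^ p * (|h| ^ p + (Fintype.card ι : ℝ) ^ (p - 1) * interactionWith p y m)) :=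
  (abs_rpow_taylor_remainder_le hp _ _).trans <|
    mul_le_mul_of_nonneg_left
      (add_le_add (rpow_mul_sq_add_sum_erase_le h) (rpow_add_sum_erase_le (by linarith) hm h))
      (mul_nonneg (by linarith) (by positivity))

end DominantProfile

lemma interactionWith_le_sum_pairInteraction {ι : Type*} [Fintype ι] [LinearOrder ι] {p : ℝ}
    (hp2 : 2 ≤ p) (hp4 : p ≤ 4) {y : ι → ℝ} {m : ι} (hm : ∀ j, |y j| ≤ |y m|) :
    interactionWith p y m ≤
      ∑ q ∈ univ.filter (fun q : ι × ι => q.1 < q.2), pairInteraction p (y q.1) (y q.2) :=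
  (sum_le_sum fun j _ => le_pairInteraction hp2 hp4 (hm j)).trans
    (sum_erase_le_sum_filter_lt (fun i j => pairInteraction p (y i) (y j))
      (fun i j => pairInteraction_comm p (y i) (y j)) (fun _ _ => pairInteraction_nonneg p _ _) m)

lemma abs_expansion_le_interactionWith {ι : Type*} [Fintype ι] [DecidableEq ι] {p : ℝ}
    (hp : 2 ≤ p) :
    ∃ C > 0, ∀ (y : ι → ℝ) (m : ι), (∀ j, |y j| ≤ |y m|) → ∀ h : ℝ,
      |p⁻¹ * |(∑ j, y j) + h| ^ p - p⁻¹ * ∑ j, |y j| ^ p - ∑ j, |y j| ^ (p - 2) * y j * h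
        - ∑ j, ∑ k ∈ univ.erase j, |y j| ^ (p - 2) * y j * y k|
      ≤ C * (|h| ^ p + (∑ j, |y j| ^ (p - 2)) * h ^ 2 + interactionWith p y m) := by
  set n : ℝ := (Fintype.card ι : ℝ)
  set c₀ := (p - 1) * 2 ^ (p - 2)
  have hc₀ : 0 ≤ c₀ := mul_nonneg (by linarith) (by positivity)
  refine ⟨c₀ * (2 * (1 + n) + 2 ^ p * (1 + n ^ (p - 1))) + n + 3, by positivity,
    fun y m hm h => ?_⟩
  have hT := abs_rpow_taylor_remainder_add_sum_erase_le hp hm h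
  have hA := abs_inv_mul_sum_erase_rpow_le_interactionWith (show (1 : ℝ) ≤ p by linarith) hm
  have hB := abs_sum_erase_mul_le hp hm h
  have hC := abs_sum_erase_sum_erase_mul_le hp hm
  have hI : 0 ≤ interactionWith p y m := interactionWith_nonneg
  rw [expansion_eq_taylor_remainder_sub p y h m]
  refine (abs_sub _ _).trans <| (add_le_add hT (abs_add_three _ _ _)).trans ?_
  set S := ∑ j, |y j| ^ (p - 2)
  set I := interactionWith p y m
  have hSh : 0 ≤ S * h ^ 2 := by positivity
  have hhp : 0 ≤ |h| ^ p := by positivity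
  have hnI : n * I ≤ n * (|h| ^ p + S * h ^ 2 + I) := by gcongr; linarith
  have hnpI : n ^ (p - 1) * I ≤ n ^ (p - 1) * (|h| ^ p + S * h ^ 2 + I) := by gcongr; linarith
  have hT' : c₀ * (2 * (S * h ^ 2 + n * I) + 2 ^ p * (|h| ^ p + n ^ (p - 1) * I))
      ≤ c₀ * (2 * (1 + n) * (|h| ^ p + S * h ^ 2 + I)
        + 2 ^ p * (1 + n ^ (p - 1)) * (|h| ^ p + S * h ^ 2 + I)) := by
    gcongr c₀ * (?_ + ?_)
    · linarith
    · rw [mul_assoc]; gcongr 2 ^ p * ?_; linarith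
  linarith

theorem abs_expansion_le {ι : Type*} [Fintype ι] [LinearOrder ι] [Nonempty ι] {p : ℝ}
    (hp2 : 2 ≤ p) (hp4 : p ≤ 4) :
    ∃ C > 0, ∀ (y : ι → ℝ) (h : ℝ),
      |p⁻¹ * |(∑ j, y j) + h| ^ p - p⁻¹ * ∑ j, |y j| ^ p - ∑ j, |y j| ^ (p - 2) * y j * h
        - ∑ j, ∑ k ∈ univ.erase j, |y j| ^ (p - 2) * y j * y k|
      ≤ C * (|h| ^ p + (∑ j, |y j| ^ (p - 2)) * h ^ 2
          + ∑ q ∈ univ.filter (fun q : ι × ι => q.1 < q.2), pairInteraction p (y q.1) (y q.2)) := by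
  obtain ⟨C, hC, hbound⟩ := abs_expansion_le_interactionWith (ι := ι) hp2
  refine ⟨C, hC, fun y h => ?_⟩
  obtain ⟨m, -, hm⟩ := exists_max_image univ (fun j => |y j|) univ_nonempty
  refine (hbound y m (fun j => hm j (mem_univ j)) h).trans ?_
  gcongr
  exact interactionWith_le_sum_pairInteraction hp2 hp4 fun j => hm j (mem_univ j)

theorem pointwise_potential_expansion (N : ℕ) (hN : 5 ≤ N) (J : ℕ) (hJ : 1 ≤ J) :
    ∃ C > 0, ∀ (y : Fin J → ℝ) (h : ℝ),
      |((N : ℝ) - 2) / (2 * (N : ℝ)) * |(∑ j, y j) + h| ^ (2 * (N : ℝ) / ((N : ℝ) - 2))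
        - ((N : ℝ) - 2) / (2 * (N : ℝ)) * ∑ j, |y j| ^ (2 * (N : ℝ) / ((N : ℝ) - 2))
        - ∑ j, |y j| ^ ((4 : ℝ) / ((N : ℝ) - 2)) * y j * h
        - ∑ j, ∑ k ∈ Finset.univ.erase j,
            |y j| ^ ((4 : ℝ) / ((N : ℝ) - 2)) * y j * y k|
      ≤ C * (|h| ^ (2 * (N : ℝ) / ((N : ℝ) - 2))
          + (∑ j, |y j| ^ ((4 : ℝ) / ((N : ℝ) - 2))) * h ^ 2
          + ∑ p ∈ Finset.univ.filter (fun p : Fin J × Fin J => p.1 < p.2),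
              (min (|y p.1| ^ ((4 : ℝ) / ((N : ℝ) - 2)) * (y p.2) ^ 2)
                   (|y p.2| ^ ((4 : ℝ) / ((N : ℝ) - 2)) * (y p.1) ^ 2)
               + min (|y p.1| ^ (((N : ℝ) + 2) / ((N : ℝ) - 2)) * |y p.2|)
                     (|y p.2| ^ (((N : ℝ) + 2) / ((N : ℝ) - 2)) * |y p.1|))) := by
  have hN5 : (5 : ℝ) ≤ N := by exact_mod_cast hN
  have hN2 : (0 : ℝ) < N - 2 := by linarith
  set p := 2 * (N : ℝ) / ((N : ℝ) - 2)
  have hp2 : 2 ≤ p := by rw [le_div_iff₀ hN2]; linarith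
  have hp4 : p ≤ 4 := by rw [div_le_iff₀ hN2]; linarith
  have e0 : ((N : ℝ) - 2) / (2 * N) = p⁻¹ := (inv_div _ _).symm
  have e1 : (4 : ℝ) / (N - 2) = p - 2 := by simp only [p]; field_simp; ring
  have e2 : ((N : ℝ) + 2) / (N - 2) = p - 1 := by simp only [p]; field_simp; ring
  have : NeZero J := ⟨by omega⟩
  rw [e0, e1, e2]
  exact abs_expansion_le hp2 hp4
end
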